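/- Under the same hypotheses (π unitary representation of G, Γ ≤ G, L a Γ-wandering generating subspace, P₀ a commuting projection, π₀(g) = P₀π(g)P₀, and absolute summability in operator norm of (P_L π₀(θ) P_L)_θ over each coset involved), define for a subset A ⊆ G of the form A = σ₁Γσ₂ the operator Φ(A) = Σ_{θ∈A} P_L π₀(θ) P_L. Then for all σ₁, σ₂ ∈ G one has Φ(σ₁Γ)·Φ(Γσ₂) = Φ(σ₁Γσ₂). -/

import Mathlib

/-!
Since `L` is wandering and generating, `H` is the Hilbert sum of the translates `π(γ)L`, and
`π(γ) P π(γ)⁻¹` is the orthogonal projection onto `π(γ)L`; hence `∑_γ π(γ) P π(γ)⁻¹ = 1` in the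
strong operator topology. As `P₀` commutes with `π` and is idempotent, this gives
`∑_γ P P₀ π(aγ) P₀ P · P P₀ π(γ⁻¹b) P₀ P = P P₀ π(ab) P₀ P`. Expanding the product of the two
absolutely convergent series and regrouping the terms by `δ = γγ'` then yields the identity.
-/

open scoped InnerProductSpace

section Projection

variable {𝕜 H : Type*} [RCLike 𝕜] [NormedAddCommGroup H] [InnerProductSpace 𝕜 H]
  {L : Submodule 𝕜 H} {P : H →L[𝕜] H}

lemma Submodule.isClosed_of_retraction (hPmem : ∀ x, P x ∈ L) (hPfix : ∀ x ∈ L, P x = x) :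
    IsClosed (L : Set H) := by
  have hL : (L : Set H) = {x | P x = x} :=
    Set.ext fun x => ⟨hPfix x, fun hx => hx ▸ hPmem x⟩
  exact hL ▸ isClosed_eq P.continuous continuous_id

lemma projection_eq_zero_of_forall_inner_eq_zero (hPmem : ∀ x, P x ∈ L)
    (hPorth : ∀ x, ∀ y ∈ L, ⟪x - P x, y⟫_𝕜 = 0) {v : H} (hv : ∀ y ∈ L, ⟪v, y⟫_𝕜 = 0) :
    P v = 0 := by
  have h := hPorth v (P v) (hPmem v)
  rw [inner_sub_left, hv _ (hPmem v), zero_sub, neg_eq_zero, inner_self_eq_zero] at h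
  exact h

end Projection

section UnitaryRepresentation

variable {𝕜 G H : Type*} [RCLike 𝕜] [Group G] [NormedAddCommGroup H] [InnerProductSpace 𝕜 H]
  (π : G →* (H →L[𝕜] H))

lemma map_inv_apply_map_apply (g : G) (v : H) : π g⁻¹ (π g v) = v := by
  change (π g⁻¹ * π g) v = v
  rw [← map_mul, inv_mul_cancel, map_one]
  rfl

lemma map_apply_map_inv_apply (g : G) (v : H) : π g (π g⁻¹ v) = v := by
  simpa using map_inv_apply_map_apply π g⁻¹ v

variable {π}

lemma inner_map_inv_apply_left (hunit : ∀ g x y, ⟪π g x, π g y⟫_𝕜 = ⟪x, y⟫_𝕜) (g : G) (x y : H) :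
    ⟪π g⁻¹ x, y⟫_𝕜 = ⟪x, π g y⟫_𝕜 := by
  rw [← hunit g, map_apply_map_inv_apply]

def MonoidHom.toLinearIsometry (hunit : ∀ g x y, ⟪π g x, π g y⟫_𝕜 = ⟪x, y⟫_𝕜) (g : G) :
    H →ₗᵢ[𝕜] H where
  toLinearMap := (π g).toLinearMap
  norm_map' v := by
    simp only [ContinuousLinearMap.coe_coe, @norm_eq_sqrt_re_inner 𝕜, hunit]

@[simp]
lemma MonoidHom.toLinearIsometry_apply (hunit : ∀ g x y, ⟪π g x, π g y⟫_𝕜 = ⟪x, y⟫_𝕜)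
    (g : G) (v : H) : π.toLinearIsometry hunit g v = π g v :=
  rfl

end UnitaryRepresentation

section Wandering

variable {𝕜 G H : Type*} [RCLike 𝕜] [Group G] [NormedAddCommGroup H] [InnerProductSpace 𝕜 H]
  {π : G →* (H →L[𝕜] H)} {Γ : Subgroup G} {L : Submodule 𝕜 H} {P : H →L[𝕜] H}

lemma isHilbertSum_translates [CompleteSpace H] [CompleteSpace L]
    (hunit : ∀ g x y, ⟪π g x, π g y⟫_𝕜 = ⟪x, y⟫_𝕜)
    (horth : ∀ γ γ' : Γ, γ ≠ γ' → ∀ x ∈ L, ∀ y ∈ L, ⟪π ↑γ x, π ↑γ' y⟫_𝕜 = 0)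
    (hgen : (⨆ γ : Γ, L.map (π ↑γ).toLinearMap).topologicalClosure = ⊤) :
    IsHilbertSum 𝕜 (fun _ : Γ => L) fun γ => (π.toLinearIsometry hunit γ).comp L.subtypeₗᵢ := by
  refine IsHilbertSum.mk (fun γ γ' h v w => horth γ γ' h v v.2 w w.2) (le_of_eq ?_)
  rw [← hgen]
  congr! with γ
  ext y
  simp

lemma projection_map_inv_map_eq_zero (hunit : ∀ g x y, ⟪π g x, π g y⟫_𝕜 = ⟪x, y⟫_𝕜)
    (horth : ∀ γ γ' : Γ, γ ≠ γ' → ∀ x ∈ L, ∀ y ∈ L, ⟪π ↑γ x, π ↑γ' y⟫_𝕜 = 0)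
    (hPmem : ∀ x, P x ∈ L) (hPorth : ∀ x, ∀ y ∈ L, ⟪x - P x, y⟫_𝕜 = 0)
    {γ γ' : Γ} (h : γ' ≠ γ) {v : H} (hv : v ∈ L) : P (π (γ : G)⁻¹ (π γ' v)) = 0 :=
  projection_eq_zero_of_forall_inner_eq_zero hPmem hPorth fun y hy => by
    rw [inner_map_inv_apply_left hunit]
    exact horth γ' γ h v hv y hy

theorem hasSum_map_projection_map_inv [CompleteSpace H]
    (hunit : ∀ g x y, ⟪π g x, π g y⟫_𝕜 = ⟪x, y⟫_𝕜)
    (horth : ∀ γ γ' : Γ, γ ≠ γ' → ∀ x ∈ L, ∀ y ∈ L, ⟪π ↑γ x, π ↑γ' y⟫_𝕜 = 0)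
    (hgen : (⨆ γ : Γ, L.map (π ↑γ).toLinearMap).topologicalClosure = ⊤)
    (hPmem : ∀ x, P x ∈ L) (hPfix : ∀ x ∈ L, P x = x)
    (hPorth : ∀ x, ∀ y ∈ L, ⟪x - P x, y⟫_𝕜 = 0) (x : H) :
    HasSum (fun γ : Γ => π γ (P (π (γ : G)⁻¹ x))) x := by
  have : CompleteSpace L := (Submodule.isClosed_of_retraction hPmem hPfix).completeSpace_coe
  let hV := isHilbertSum_translates hunit horth hgen
  let w := hV.linearIsometryEquiv x
  have hw : HasSum (fun γ : Γ => π γ (w γ)) x := by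
    simpa [w] using hV.hasSum_linearIsometryEquiv_symm w
  have hcoord (γ : Γ) : P (π (γ : G)⁻¹ x) = w γ := by
    have hterm := hasSum_single (f := fun γ' : Γ => P (π (γ : G)⁻¹ (π γ' (w γ')))) γ
      fun γ' h => projection_map_inv_map_eq_zero hunit horth hPmem hPorth h (w γ').2
    calc P (π (γ : G)⁻¹ x) = P (π (γ : G)⁻¹ (π γ (w γ))) :=
          (hw.mapL (P.comp (π (γ : G)⁻¹))).unique hterm
      _ = w γ := by rw [map_inv_apply_map_apply, hPfix _ (w γ).2]
  simpa only [hcoord] using hw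

end Wandering

section ConvolutionProduct

variable {R K : Type*} [NormedRing R] [CompleteSpace R] [Group K] {f g : K → R}

lemma summable_mul_inv_mul (hf : Summable fun γ => ‖f γ‖) (hg : Summable fun γ => ‖g γ‖)
    (δ : K) : Summable fun γ => f γ * g (γ⁻¹ * δ) :=
  (summable_mul_of_summable_norm hf hg).comp_injective (i := fun γ => (γ, γ⁻¹ * δ))
    fun _ _ h => congrArg Prod.fst h

lemma tsum_mul_tsum_eq_tsum_tsum_mul_inv_mul (hf : Summable fun γ => ‖f γ‖)
    (hg : Summable fun γ => ‖g γ‖) :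
    (∑' γ, f γ) * ∑' γ, g γ = ∑' δ, ∑' γ, f γ * g (γ⁻¹ * δ) := by
  let e : K × K ≃ K × K :=
    { toFun := fun p => (p.2, p.2⁻¹ * p.1)
      invFun := fun q => (q.1 * q.2, q.1)
      left_inv := fun p => by simp
      right_inv := fun q => by simp }
  have hsum : Summable fun p : K × K => f (e p).1 * g (e p).2 :=
    e.summable_iff.2 (summable_mul_of_summable_norm hf hg)
  rw [tsum_mul_tsum_of_summable_norm hf hg, ← e.tsum_eq]
  exact hsum.tsum_prod

end ConvolutionProduct

lemma ContinuousLinearMap.tsum_eq_of_hasSum_apply {𝕜 E ι : Type*} [NontriviallyNormedField 𝕜]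
    [NormedAddCommGroup E] [NormedSpace 𝕜 E] {F : ι → E →L[𝕜] E} {T : E →L[𝕜] E}
    (hF : Summable F) (h : ∀ x, HasSum (fun i => F i x) (T x)) : ∑' i, F i = T :=
  ext fun x => (hF.hasSum.mapL (apply 𝕜 E x)).unique (h x)

section Compression

variable {𝕜 G H : Type*} [RCLike 𝕜] [Group G] [NormedAddCommGroup H] [InnerProductSpace 𝕜 H]

/-- The operator `P_L π₀(g) P_L`. -/
def compression (P P₀ : H →L[𝕜] H) (π : G →* (H →L[𝕜] H)) (g : G) : H →L[𝕜] H :=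
  P.comp (P₀.comp ((π g).comp (P₀.comp P)))

variable {π : G →* (H →L[𝕜] H)} {Γ : Subgroup G} {L : Submodule 𝕜 H} {P P₀ : H →L[𝕜] H}

theorem hasSum_compression_mul_compression_apply [CompleteSpace H]
    (hunit : ∀ g x y, ⟪π g x, π g y⟫_𝕜 = ⟪x, y⟫_𝕜)
    (horth : ∀ γ γ' : Γ, γ ≠ γ' → ∀ x ∈ L, ∀ y ∈ L, ⟪π ↑γ x, π ↑γ' y⟫_𝕜 = 0)
    (hgen : (⨆ γ : Γ, L.map (π ↑γ).toLinearMap).topologicalClosure = ⊤)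
    (hPmem : ∀ x, P x ∈ L) (hPfix : ∀ x ∈ L, P x = x)
    (hPorth : ∀ x, ∀ y ∈ L, ⟪x - P x, y⟫_𝕜 = 0)
    (hP₀idem : P₀.comp P₀ = P₀) (hcomm : ∀ g, P₀.comp (π g) = (π g).comp P₀) (a b : G) (x : H) :
    HasSum (fun γ : Γ => (compression P P₀ π (a * γ) * compression P P₀ π ((γ : G)⁻¹ * b)) x)
      (compression P P₀ π (a * b) x) := by
  have hP₀ (v : H) : P₀ (P₀ v) = P₀ v := congrArg (· v) hP₀idem
  have hP₀π (g : G) (v : H) : P₀ (π g v) = π g (P₀ v) := congrArg (· v) (hcomm g)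
  have hPP (v : H) : P (P v) = P v := hPfix _ (hPmem v)
  -- the `γ`-th term is `P P₀ π(a)` applied to `π(γ) P π(γ)⁻¹ v`
  set v := P₀ (π b (P₀ (P x)))
  convert (hasSum_map_projection_map_inv hunit horth hgen hPmem hPfix hPorth v).mapL
    (P.comp (P₀.comp (π a))) using 1
  · ext γ
    simp [compression, v, hP₀, hP₀π, hPP]
  · simp [compression, v, hP₀, hP₀π]

end Compression

theorem stmt14_general {G H : Type*} [Group G] [NormedAddCommGroup H] [InnerProductSpace ℂ H]
    [CompleteSpace H] (π : G →* (H →L[ℂ] H))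
    (hunit : ∀ (g : G) (x y : H), ⟪π g x, π g y⟫_ℂ = ⟪x, y⟫_ℂ)
    (Γ : Subgroup G) (L : Submodule ℂ H)
    (horth : ∀ γ γ' : Γ, γ ≠ γ' → ∀ x ∈ L, ∀ y ∈ L, ⟪π ↑γ x, π ↑γ' y⟫_ℂ = 0)
    (hgen : (⨆ γ : Γ, L.map (π ↑γ).toLinearMap).topologicalClosure = ⊤)
    (P : H →L[ℂ] H)
    (hPmem : ∀ x : H, P x ∈ L) (hPfix : ∀ x ∈ L, P x = x)
    (hPorth : ∀ x : H, ∀ y ∈ L, ⟪x - P x, y⟫_ℂ = 0)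
    (P₀ : H →L[ℂ] H) (hP₀idem : P₀.comp P₀ = P₀)
    (hcomm : ∀ g : G, P₀.comp (π g) = (π g).comp P₀)
    (σ₁ σ₂ : G)
    (hs₁ : Summable fun γ : Γ => ‖P.comp (P₀.comp ((π (σ₁ * ↑γ)).comp (P₀.comp P)))‖)
    (hs₂ : Summable fun γ : Γ => ‖P.comp (P₀.comp ((π (↑γ * σ₂)).comp (P₀.comp P)))‖) :
    (∑' γ : Γ, P.comp (P₀.comp ((π (σ₁ * ↑γ)).comp (P₀.comp P)))).comp
        (∑' γ : Γ, P.comp (P₀.comp ((π (↑γ * σ₂)).comp (P₀.comp P))))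
      = ∑' γ : Γ, P.comp (P₀.comp ((π (σ₁ * ↑γ * σ₂)).comp (P₀.comp P))) := by
  change (∑' γ : Γ, compression P P₀ π (σ₁ * γ)) * ∑' γ : Γ, compression P P₀ π (γ * σ₂)
    = ∑' γ : Γ, compression P P₀ π (σ₁ * γ * σ₂)
  change Summable fun γ : Γ => ‖compression P P₀ π (σ₁ * γ)‖ at hs₁
  change Summable fun γ : Γ => ‖compression P P₀ π (γ * σ₂)‖ at hs₂
  rw [tsum_mul_tsum_eq_tsum_tsum_mul_inv_mul hs₁ hs₂]
  refine tsum_congr fun δ => ContinuousLinearMap.tsum_eq_of_hasSum_apply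
    (summable_mul_inv_mul hs₁ hs₂ δ) fun x => ?_
  simpa [mul_assoc] using hasSum_compression_mul_compression_apply hunit horth hgen hPmem hPfix
    hPorth hP₀idem hcomm σ₁ (δ * σ₂) x

/-- With `Φ(A) = Σ_{θ∈A} P_L π₀(θ) P_L` (absolutely summable in operator norm), for all
`σ₁, σ₂ ∈ G` one has `Φ(σ₁Γ)·Φ(Γσ₂) = Φ(σ₁Γσ₂)`. -/
theorem stmt14 {G H : Type*} [Group G] [NormedAddCommGroup H] [InnerProductSpace ℂ H]
    [CompleteSpace H] (π : G →* (H →L[ℂ] H))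
    (hunit : ∀ (g : G) (x y : H), ⟪π g x, π g y⟫_ℂ = ⟪x, y⟫_ℂ)
    (Γ : Subgroup G) (L : Submodule ℂ H)
    (horth : ∀ γ γ' : Γ, γ ≠ γ' → ∀ x ∈ L, ∀ y ∈ L, ⟪π ↑γ x, π ↑γ' y⟫_ℂ = 0)
    (hgen : (⨆ γ : Γ, L.map (π ↑γ).toLinearMap).topologicalClosure = ⊤)
    (P : H →L[ℂ] H)
    (hPmem : ∀ x : H, P x ∈ L) (hPfix : ∀ x ∈ L, P x = x)
    (hPorth : ∀ x : H, ∀ y ∈ L, ⟪x - P x, y⟫_ℂ = 0)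
    (P₀ : H →L[ℂ] H) (hP₀idem : P₀.comp P₀ = P₀)
    (hP₀sa : ∀ x y : H, ⟪P₀ x, y⟫_ℂ = ⟪x, P₀ y⟫_ℂ)
    (hcomm : ∀ g : G, P₀.comp (π g) = (π g).comp P₀)
    (σ₁ σ₂ : G)
    (hs₁ : Summable fun γ : Γ => ‖P.comp (P₀.comp ((π (σ₁ * ↑γ)).comp (P₀.comp P)))‖)
    (hs₂ : Summable fun γ : Γ => ‖P.comp (P₀.comp ((π (↑γ * σ₂)).comp (P₀.comp P)))‖)
    (hs₃ : Summable fun γ : Γ =>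
      ‖P.comp (P₀.comp ((π (σ₁ * ↑γ * σ₂)).comp (P₀.comp P)))‖) :
    (∑' γ : Γ, P.comp (P₀.comp ((π (σ₁ * ↑γ)).comp (P₀.comp P)))).comp
        (∑' γ : Γ, P.comp (P₀.comp ((π (↑γ * σ₂)).comp (P₀.comp P))))
      = ∑' γ : Γ, P.comp (P₀.comp ((π (σ₁ * ↑γ * σ₂)).comp (P₀.comp P))) :=
  stmt14_general π hunit Γ L horth hgen P hPmem hPfix hPorth P₀ hP₀idem hcomm σ₁ σ₂ hs₁ hs₂
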